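/- For any letters a, b, the replacement and shuffle operators satisfy Θ_{a,b} ∘ sh_a - sh_a ∘ Θ_{a,b} = sh_b as linear operators on the span of words of length n. -/

import Mathlib

open Finsupp

variable {A : Type} [DecidableEq A]

/-- The formal sum of `Finsupp.single w 1` over a list of words. -/
noncomputable def wordSum (l : List (List A)) : List A →₀ ℂ :=
  (l.map fun w => Finsupp.single w (1 : ℂ)).sum

/-- All words obtained from `w` by inserting the letter `a` at one position. -/
def insertions (a : A) : List A → List (List A)
  | [] => [[a]]
  | b :: t => (a :: b :: t) :: (insertions a t).map (b :: ·)

/-- All words obtained from `w` by deleting one occurrence of the letter `a`. -/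
def deletions (a : A) : List A → List (List A)
  | [] => []
  | b :: t => (if b = a then [t] else []) ++ (deletions a t).map (b :: ·)

/-- All words obtained from `w` by replacing one occurrence of `b` by `a`. -/
def replacements (b a : A) : List A → List (List A)
  | [] => []
  | c :: t => (if c = b then [a :: t] else []) ++ (replacements b a t).map (c :: ·)

/-- The insertion operator `sh_a`. -/
noncomputable def shOp (a : A) : (List A →₀ ℂ) →ₗ[ℂ] (List A →₀ ℂ) :=
  Finsupp.linearCombination ℂ (fun w => wordSum (insertions a w))

/-- The deletion operator `∂_a`. -/
noncomputable def delOp (a : A) : (List A →₀ ℂ) →ₗ[ℂ] (List A →₀ ℂ) :=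
  Finsupp.linearCombination ℂ (fun w => wordSum (deletions a w))

/-- The replacement operator `Θ_{b,a}`. -/
noncomputable def repOp (b a : A) : (List A →₀ ℂ) →ₗ[ℂ] (List A →₀ ℂ) :=
  Finsupp.linearCombination ℂ (fun w => wordSum (replacements b a w))

/-- Remove the letter at position `i` of `w` and reinsert it at position `j` (0-based). -/
def moveCard (w : List A) (i j : ℕ) : List A :=
  match w[i]? with
  | Option.none => w
  | Option.some c => (w.eraseIdx i).insertIdx j c

/-- The random-to-random operator applied to a single word: the sum over all ordered
pairs of positions `(i, j)` of removing the letter at position `i` and reinserting it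
at position `j` (the diagonal `i = j` contributes `w.length • w`). -/
noncomputable def r2rWord (w : List A) : List A →₀ ℂ :=
  ∑ i ∈ Finset.range w.length, ∑ j ∈ Finset.range w.length,
    Finsupp.single (moveCard w i j) (1 : ℂ)

/-- The (unnormalized) random-to-random operator `R2R`. -/
noncomputable def r2rOp : (List A →₀ ℂ) →ₗ[ℂ] (List A →₀ ℂ) :=
  Finsupp.linearCombination ℂ r2rWord

/-- Random-to-top on a single word: move the letter at each position to the end. -/
noncomputable def r2tWord (w : List A) : List A →₀ ℂ :=
  ∑ i ∈ Finset.range w.length, Finsupp.single (moveCard w i (w.length - 1)) (1 : ℂ)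

/-- The (unnormalized) random-to-top operator `R2T`. -/
noncomputable def r2tOp : (List A →₀ ℂ) →ₗ[ℂ] (List A →₀ ℂ) :=
  Finsupp.linearCombination ℂ r2tWord

/-- Top-to-random on a single word: move the last letter to each position. -/
noncomputable def t2rWord (w : List A) : List A →₀ ℂ :=
  ∑ j ∈ Finset.range w.length, Finsupp.single (moveCard w (w.length - 1) j) (1 : ℂ)

/-- The (unnormalized) top-to-random operator `T2R`. -/
noncomputable def t2rOp : (List A →₀ ℂ) →ₗ[ℂ] (List A →₀ ℂ) :=
  Finsupp.linearCombination ℂ t2rWord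

/-!
Replacing one `a` by `b` in a word obtained by inserting `a` into `w` either hits the inserted
letter, which yields `sh_b w`, or an `a` already present in `w`, which yields the words of
`sh_a (Θ_{a,b} w)`. Both operators are linear extensions of list-valued maps on words, so the
identity reduces to a permutation of lists of words.
-/

section WordSum

variable {α : Type}

theorem wordSum_cons (w : List α) (l : List (List α)) :
    wordSum (w :: l) = Finsupp.single w 1 + wordSum l := by
  simp [wordSum]

theorem wordSum_append (l₁ l₂ : List (List α)) :
    wordSum (l₁ ++ l₂) = wordSum l₁ + wordSum l₂ := by
  simp [wordSum]

theorem List.Perm.wordSum_eq {l₁ l₂ : List (List α)} (h : l₁.Perm l₂) :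
    wordSum l₁ = wordSum l₂ :=
  (h.map _).sum_eq

theorem linearCombination_wordSum (f : List α → List (List α)) (l : List (List α)) :
    linearCombination ℂ (fun w => wordSum (f w)) (wordSum l) = wordSum (l.flatMap f) := by
  induction l with
  | nil => simp [wordSum]
  | cons w l ih =>
    rw [wordSum_cons, map_add, ih, linearCombination_single, one_smul, List.flatMap_cons,
      wordSum_append]

end WordSum

theorem insertions_flatMap_replacements_perm (a b : A) (w : List A) :
    ((insertions a w).flatMap (replacements a b)).Perm
      (insertions b w ++ (replacements a b w).flatMap (insertions a)) := by
  induction w with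
  | nil => simp [insertions, replacements]
  | cons c t ih =>
    rw [← Multiset.coe_eq_coe] at ih ⊢
    by_cases hc : c = a <;>
    · simp only [insertions, replacements, List.flatMap_cons, List.flatMap_map, List.map_cons,
        List.map_map, List.nil_append, List.singleton_append, hc, if_true, if_false,
        ← Multiset.coe_add, ← Multiset.cons_coe, ← Multiset.coe_bind, ← Multiset.map_coe,
        Multiset.bind_cons, ← Multiset.map_bind] at *
      rw [ih]
      simp only [Multiset.map_add, Function.comp_def, ← Multiset.singleton_add]
      abel

theorem rep_comp_sh_sub_sh_comp_rep_general (a b : A) (w : List A) :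
    repOp a b (shOp a (Finsupp.single w (1 : ℂ))) -
      shOp a (repOp a b (Finsupp.single w (1 : ℂ))) =
    shOp b (Finsupp.single w (1 : ℂ)) := by
  simp only [shOp, repOp, linearCombination_single, one_smul, linearCombination_wordSum]
  rw [sub_eq_iff_eq_add, (insertions_flatMap_replacements_perm a b w).wordSum_eq, wordSum_append]

/-- **Lemma 36, Equation (14).** On words of length `n`,
`Θ_{a,b} ∘ sh_a - sh_a ∘ Θ_{a,b} = sh_b`. -/
theorem rep_comp_sh_sub_sh_comp_rep (a b : A) (n : ℕ) (w : List A) (hw : w.length = n) :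
    repOp a b (shOp a (Finsupp.single w (1 : ℂ))) -
      shOp a (repOp a b (Finsupp.single w (1 : ℂ))) =
    shOp b (Finsupp.single w (1 : ℂ)) :=
  rep_comp_sh_sub_sh_comp_rep_general a b w
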